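/- For a finite group G, an element g is a dominant vertex of the conjugacy supercommuting graph of G (i.e., every element of G has a conjugate commuting with g) if and only if g lies in the center Z(G). -/

import Mathlib

/-!
If every conjugacy class of `G` meets the centralizer of `g`, then that centralizer is all of `G`
by Jordan's theorem: a proper subgroup of a finite group misses some conjugacy class. Jordan's
theorem in turn follows from Burnside's lemma applied to the transitive action on `G ⧸ H`: the
fixed-point counts average to one orbit, while the identity alone fixes `[G : H] ≥ 2` points, so
some element fixes nothing.
-/

open MulAction

theorem MulAction.exists_forall_smul_ne_of_isPretransitive {G α : Type*} [Group G] [Finite G]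
    [MulAction G α] [Finite α] [IsPretransitive G α] (hα : 1 < Nat.card α) :
    ∃ g : G, ∀ x : α, g • x ≠ x := by
  classical
  have := Fintype.ofFinite G
  have := Fintype.ofFinite α
  have : Nonempty α := (Nat.card_pos_iff.mp (by omega)).1
  by_contra! hfix
  have one_orbit : Fintype.card (orbitRel.Quotient G α) = 1 := by
    have := (pretransitive_iff_subsingleton_quotient G α).mp inferInstance
    exact Fintype.card_eq_one_iff.mpr
      ⟨Quotient.mk _ (Classical.arbitrary α), fun _ => Subsingleton.elim _ _⟩
  have burnside := sum_card_fixedBy_eq_card_orbits_mul_card_group G α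
  rw [one_orbit, one_mul] at burnside
  have fixedBy_one : Fintype.card (fixedBy α (1 : G)) = Fintype.card α := by
    simp [fixedBy_one_eq_univ]
  have card_lt_sum : Fintype.card G < ∑ g : G, Fintype.card (fixedBy α g) :=
    calc Fintype.card G = ∑ _g : G, 1 := by simp
      _ < ∑ g : G, Fintype.card (fixedBy α g) := by
        refine Finset.sum_lt_sum (fun g _ => Fintype.card_pos_iff.mpr ?_) ⟨1, Finset.mem_univ _, ?_⟩
        · obtain ⟨x, hx⟩ := hfix g
          exact ⟨⟨x, hx⟩⟩
        · rw [fixedBy_one, ← Nat.card_eq_fintype_card]; exact hα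
  omega

theorem Subgroup.exists_forall_conj_notMem_of_ne_top {G : Type*} [Group G] [Finite G]
    {H : Subgroup G} (hH : H ≠ ⊤) : ∃ g : G, ∀ a : G, a⁻¹ * g * a ∉ H := by
  obtain ⟨g, hg⟩ := exists_forall_smul_ne_of_isPretransitive (G := G) (α := G ⧸ H)
    (H.one_lt_index_of_ne_top hH)
  refine ⟨g, fun a ha => hg a ?_⟩
  rw [MulAction.Quotient.smul_mk, QuotientGroup.eq]
  simpa [mul_assoc] using H.inv_mem ha

theorem stmt_14 (G : Type*) [Group G] [Finite G] (g : G) :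
    (∀ h : G, ∃ a : G, Commute g (a⁻¹ * h * a)) ↔ g ∈ Subgroup.center G := by
  constructor
  · intro hg
    have centralizer_eq_top : Subgroup.centralizer {g} = ⊤ := by
      by_contra hne
      obtain ⟨h, hh⟩ := Subgroup.exists_forall_conj_notMem_of_ne_top hne
      obtain ⟨a, ha⟩ := hg h
      exact hh a (Subgroup.mem_centralizer_singleton_iff.mpr ha.symm)
    simpa using Subgroup.centralizer_eq_top_iff_subset.mp centralizer_eq_top
  · intro hg h
    exact ⟨1, by simpa [Commute, SemiconjBy] using (Subgroup.mem_center_iff.mp hg h).symm⟩
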